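/- The probability QM+1 = P( max{ log2(1 + Ps·Z/(P0·G + 1)), log2(1 + τ(G)) } < Rs, G < α0 ) equals Σ_{i=0}^{M} C(M,i)·(−1)^i·e^{−αs·i}·(1 − e^{−(αs·P0·i + 1)·α0})/(αs·P0·i + 1), where C(M,i) is the binomial coefficient. -/

import Mathlib

/-!
On `{G < α₀}` the threshold `τ(G)` vanishes, and `log₂(1 + Ps Z/(P₀G + 1)) < Rs` says
`Z < αs (P₀G + 1)`, so the event is `{G < α₀, Hₘ < αs (P₀G + 1) for all m}`. Since the
`Hₘ` are i.i.d. Exp(1) and independent of `G`, its probability is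
`∫₀^{α₀} e^{-g} (1 - e^{-αs (P₀g + 1)})^M dg`; expanding the power binomially leaves
integrals of single exponentials.
-/

open MeasureTheory ProbabilityTheory Real

/-- The interference threshold `τ(g) = max{0, g/α₀ − 1}`. -/
noncomputable def tau (α0 g : ℝ) : ℝ := max 0 (g / α0 - 1)

open Set

-- `⨆` over an empty index type is `0` in `ℝ`, hence `0 < a`.
lemma Real.iSup_lt_iff_of_finite {ι : Type*} [Finite ι] {f : ι → ℝ} {a : ℝ} (ha : 0 < a) :
    ⨆ i, f i < a ↔ ∀ i, f i < a := by
  rcases isEmpty_or_nonempty ι with hι | hι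
  · simp [ha]
  · refine ⟨fun h i => (le_ciSup (finite_range f).bddAbove i).trans_lt h, fun h => ?_⟩
    obtain ⟨i, hi⟩ := Finite.exists_max f
    exact (ciSup_le hi).trans_lt (h i)

lemma Real.logb_one_add_lt_iff {b x y : ℝ} (hb : 1 < b) (hx : -1 < x) :
    logb b (1 + x) < y ↔ x < b ^ y - 1 := by
  rw [logb_lt_iff_lt_rpow hb (by linarith)]
  constructor <;> intro h <;> linarith

lemma tau_eq_zero {α0 g : ℝ} (hα0 : 0 < α0) (hg : g ≤ α0) : tau α0 g = 0 := by
  have : g / α0 ≤ 1 := (div_le_one hα0).2 hg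
  simp only [tau]
  exact max_eq_left (by linarith)

lemma max_logb_lt_and_lt_iff {P0 Ps Rs α0 g z : ℝ} (hP0 : 0 ≤ P0) (hPs : 0 < Ps) (hRs : 0 < Rs)
    (hα0 : 0 < α0) (hg : 0 ≤ g) (hz : 0 ≤ z) :
    max (logb 2 (1 + Ps * z / (P0 * g + 1))) (logb 2 (1 + tau α0 g)) < Rs ∧ g < α0 ↔
      g ∈ Ico 0 α0 ∧ z < (2 ^ Rs - 1) / Ps * (P0 * g + 1) := by
  have hd : 0 < P0 * g + 1 := by positivity
  have hsnr : Ps * z / (P0 * g + 1) < 2 ^ Rs - 1 ↔ z < (2 ^ Rs - 1) / Ps * (P0 * g + 1) := by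
    rw [div_lt_iff₀ hd, div_mul_eq_mul_div, lt_div_iff₀ hPs, mul_comm z]
  have hsnr_nonneg : 0 ≤ Ps * z / (P0 * g + 1) := by positivity
  rw [max_lt_iff, logb_one_add_lt_iff one_lt_two (by linarith), hsnr]
  constructor
  · rintro ⟨⟨hzlt, -⟩, hgα⟩
    exact ⟨⟨hg, hgα⟩, hzlt⟩
  · rintro ⟨⟨-, hgα⟩, hzlt⟩
    refine ⟨⟨hzlt, ?_⟩, hgα⟩
    simpa [tau_eq_zero hα0 hgα.le] using hRs

lemma expMeasure_Iio {r : ℝ} (hr : 0 < r) (t : ℝ) :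
    expMeasure r (Iio t) = ENNReal.ofReal (1 - exp (-(r * t))) := by
  have hatom : expMeasure r {t} = 0 := by
    rw [expMeasure, gammaMeasure]
    exact withDensity_absolutelyContinuous _ _ (measure_singleton t)
  have := isProbabilityMeasure_expMeasure hr
  rw [measure_congr (Iio_ae_eq_Iic' hatom), ← ofReal_cdf, cdf_expMeasure_eq hr]
  split_ifs with ht
  · rfl
  · rw [ENNReal.ofReal_zero, eq_comm, ENNReal.ofReal_eq_zero, sub_nonpos]
    exact one_le_exp (by nlinarith)

lemma ProbabilityTheory.iIndepFun.map_fun_eq_pi_const {ι Ω β : Type*} [Fintype ι]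
    [MeasurableSpace Ω] [MeasurableSpace β] {μ : Measure Ω} {X : ι → Ω → β} (hX : iIndepFun X μ)
    (hXm : ∀ i, AEMeasurable (X i) μ) {ν : Measure β} (hXν : ∀ i, μ.map (X i) = ν) :
    μ.map (fun ω i => X i ω) = Measure.pi fun _ => ν := by
  rw [hX.map_fun_eq_pi_map hXm]
  simp_rw [hXν]

lemma measure_pi_setOf_head_mem_tail_lt {ν : Measure ℝ} [SigmaFinite ν] {n : ℕ} {s : Set ℝ}
    (hs : MeasurableSet s) {φ : ℝ → ℝ} (hφ : Measurable φ) :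
    Measure.pi (fun _ : Fin (n + 1) => ν) {x | x 0 ∈ s ∧ ∀ m : Fin n, x m.succ < φ (x 0)} =
      ∫⁻ g in s, ν (Iio (φ g)) ^ n ∂ν := by
  set T : Set (ℝ × (Fin n → ℝ)) := {p | p.1 ∈ s ∧ ∀ m, p.2 m < φ p.1}
  have hT : MeasurableSet T := by measurability
  have hpre : MeasurableEquiv.piFinSuccAbove (fun _ => ℝ) 0 ⁻¹' T =
      {x | x 0 ∈ s ∧ ∀ m : Fin n, x m.succ < φ (x 0)} := by
    ext x
    simp [T, MeasurableEquiv.piFinSuccAbove, Fin.tail]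
  rw [← hpre, (measurePreserving_piFinSuccAbove (fun _ => ν) 0).measure_preimage
    hT.nullMeasurableSet, Measure.prod_apply hT, ← lintegral_indicator hs]
  congr with g
  by_cases hg : g ∈ s
  · have hslice : Prod.mk g ⁻¹' T = univ.pi fun _ => Iio (φ g) := by
      ext y
      simp [T, hg]
    simp [hslice, hg, Measure.pi_pi]
  · have hslice : Prod.mk g ⁻¹' T = ∅ := by
      ext y
      simp [T, hg]
    simp [hslice, hg]

lemma toReal_setLIntegral_Ico_expMeasure {r a : ℝ} (hr : 0 < r) (ha : 0 ≤ a) {f : ℝ → ℝ}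
    (hf : Measurable f) (hf0 : ∀ g ∈ Ico 0 a, 0 ≤ f g) :
    (∫⁻ g in Ico 0 a, ENNReal.ofReal (f g) ∂expMeasure r).toReal =
      ∫ g in 0..a, r * exp (-(r * g)) * f g := by
  have hpdf : Measurable (exponentialPDF r) :=
    ENNReal.measurable_ofReal.comp (measurable_exponentialPDFReal r)
  have hdensity : ∀ g ∈ Ico 0 a, (exponentialPDF r * fun g => ENNReal.ofReal (f g)) g =
      ENNReal.ofReal (r * exp (-(r * g)) * f g) := fun g hg => by
    rw [Pi.mul_apply, exponentialPDF_of_nonneg hg.1, ← ENNReal.ofReal_mul (by positivity)]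
  have hnonneg : 0 ≤ᵐ[volume.restrict (Ico 0 a)] fun g => r * exp (-(r * g)) * f g :=
    (ae_restrict_iff' measurableSet_Ico).2 <| .of_forall fun g hg => by
      have := hf0 g hg
      positivity
  rw [show expMeasure r = volume.withDensity (exponentialPDF r) from rfl,
    setLIntegral_withDensity_eq_setLIntegral_mul _ hpdf hf.ennreal_ofReal measurableSet_Ico,
    setLIntegral_congr_fun measurableSet_Ico hdensity,
    ← integral_eq_lintegral_of_nonneg_ae hnonneg (by fun_prop), integral_Ico_eq_integral_Ioo,
    ← integral_Ioc_eq_integral_Ioo, intervalIntegral.integral_of_le ha]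

lemma integral_exp_mul {k : ℝ} (hk : k ≠ 0) (a b : ℝ) :
    ∫ g in a..b, exp (k * g) = (exp (k * b) - exp (k * a)) / k := by
  rw [intervalIntegral.integral_comp_mul_left exp hk, integral_exp, smul_eq_mul, inv_mul_eq_div]

lemma exp_neg_mul_one_sub_exp_pow_eq_sum (c P g : ℝ) (n : ℕ) :
    exp (-g) * (1 - exp (-(c * (P * g + 1)))) ^ n =
      ∑ i ∈ Finset.range (n + 1), (n.choose i : ℝ) * (-1) ^ i * exp (-c * i) *
        exp (-(c * P * i + 1) * g) := by
  rw [sub_eq_neg_add, add_pow, Finset.mul_sum]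
  refine Finset.sum_congr rfl fun i _ => ?_
  rw [one_pow, mul_one, neg_pow, ← exp_nat_mul]
  have hexp : exp (-g) * exp (i * -(c * (P * g + 1))) =
      exp (-c * i) * exp (-(c * P * i + 1) * g) := by
    rw [← exp_add, ← exp_add]
    ring_nf
  linear_combination ((n.choose i : ℝ) * (-1) ^ i) * hexp

lemma integral_exp_neg_mul_one_sub_exp_pow {c P : ℝ} (hc : 0 ≤ c) (hP : 0 ≤ P) (n : ℕ)
    (a : ℝ) :
    ∫ g in 0..a, exp (-g) * (1 - exp (-(c * (P * g + 1)))) ^ n =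
      ∑ i ∈ Finset.range (n + 1), (n.choose i : ℝ) * (-1) ^ i * exp (-c * i) *
        (1 - exp (-(c * P * i + 1) * a)) / (c * P * i + 1) := by
  simp_rw [exp_neg_mul_one_sub_exp_pow_eq_sum]
  rw [intervalIntegral.integral_finsetSum fun i _ =>
    (by fun_prop : Continuous _).intervalIntegrable _ _]
  refine Finset.sum_congr rfl fun i _ => ?_
  have hk : 0 < c * P * i + 1 := by positivity
  rw [intervalIntegral.integral_const_mul, integral_exp_mul (by linarith),
    mul_zero, exp_zero, mul_div_assoc, div_neg, ← neg_div, neg_sub]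

theorem hsic_pa_QM1_closed_form_general
    {Ω : Type*} [MeasurableSpace Ω] (μ : Measure Ω) [IsProbabilityMeasure μ]
    (M : ℕ)
    (P0 Ps R0 Rs : ℝ) (hP0 : 0 < P0) (hPs : 0 < Ps) (hR0 : 0 < R0) (hRs : 0 < Rs)
    (ε0 εs α0 αs : ℝ)
    (hε0 : ε0 = 2 ^ R0 - 1) (hεs : εs = 2 ^ Rs - 1)
    (hα0 : α0 = ε0 / P0) (hαs : αs = εs / Ps)
    (G : Ω → ℝ) (H : Fin M → Ω → ℝ)
    (hGmeas : Measurable G) (hHmeas : ∀ m, Measurable (H m))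
    (hGnn : ∀ ω, 0 ≤ G ω) (hHnn : ∀ m ω, 0 ≤ H m ω)
    (hGdist : Measure.map G μ = expMeasure 1)
    (hHdist : ∀ m, Measure.map (H m) μ = expMeasure 1)
    (hIndep : iIndepFun
      (Fin.cons G H : Fin (M + 1) → Ω → ℝ) μ)
    (Z : Ω → ℝ) (hZ : ∀ ω, Z ω = ⨆ m : Fin M, H m ω)
    :
    (μ {ω | max (Real.logb 2 (1 + Ps * Z ω / (P0 * G ω + 1)))
              (Real.logb 2 (1 + tau α0 (G ω))) < Rs ∧ G ω < α0}).toReal =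
      ∑ i ∈ Finset.range (M + 1),
        (M.choose i : ℝ) * (-1 : ℝ) ^ i * Real.exp (-αs * i) *
          (1 - Real.exp (-(αs * P0 * i + 1) * α0)) / (αs * P0 * i + 1) := by
  have hα0_pos : 0 < α0 := by
    rw [hα0, hε0]
    exact div_pos (sub_pos.2 (one_lt_rpow one_lt_two hR0)) hP0
  have hαs_pos : 0 < αs := by
    rw [hαs, hεs]
    exact div_pos (sub_pos.2 (one_lt_rpow one_lt_two hRs)) hPs
  have : IsProbabilityMeasure (expMeasure 1) := isProbabilityMeasure_expMeasure one_pos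
  set X : Ω → Fin (M + 1) → ℝ := fun ω i => (Fin.cons G H : Fin (M + 1) → Ω → ℝ) i ω
  have hevent : {ω | max (Real.logb 2 (1 + Ps * Z ω / (P0 * G ω + 1)))
      (Real.logb 2 (1 + tau α0 (G ω))) < Rs ∧ G ω < α0} =
      X ⁻¹' {x | x 0 ∈ Ico 0 α0 ∧ ∀ m : Fin M, x m.succ < αs * (P0 * x 0 + 1)} := by
    ext ω
    have hZnn : 0 ≤ Z ω := hZ ω ▸ Real.iSup_nonneg (hHnn · ω)
    rw [mem_ofPred_eq, max_logb_lt_and_lt_iff hP0.le hPs hRs hα0_pos (hGnn ω) hZnn, ← hεs,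
      ← hαs, hZ, Real.iSup_lt_iff_of_finite (by have := hGnn ω; positivity)]
    rfl
  have hXi : ∀ i, Measurable ((Fin.cons G H : Fin (M + 1) → Ω → ℝ) i) :=
    Fin.cases hGmeas hHmeas
  have hlaw : μ.map X = Measure.pi fun _ => expMeasure 1 :=
    hIndep.map_fun_eq_pi_const (fun i => (hXi i).aemeasurable) (Fin.cases hGdist hHdist)
  have hcdf_nonneg : ∀ g ∈ Ico 0 α0, 0 ≤ 1 - exp (-(αs * (P0 * g + 1))) := fun g hg => by
    have := hg.1
    simp only [sub_nonneg, exp_le_one_iff, neg_nonpos]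
    positivity
  rw [hevent, ← Measure.map_apply (measurable_pi_lambda _ hXi) (by measurability), hlaw,
    measure_pi_setOf_head_mem_tail_lt (φ := fun g => αs * (P0 * g + 1)) measurableSet_Ico
      (by fun_prop),
    setLIntegral_congr_fun measurableSet_Ico fun g hg => by
      rw [expMeasure_Iio one_pos, one_mul, ← ENNReal.ofReal_pow (hcdf_nonneg g hg)],
    toReal_setLIntegral_Ico_expMeasure one_pos hα0_pos.le (by fun_prop)
      fun g hg => pow_nonneg (hcdf_nonneg g hg) M]
  simp only [one_mul]
  exact integral_exp_neg_mul_one_sub_exp_pow hαs_pos.le hP0.le M α0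

/-- closed form for the probability `Q_{M+1}` appearing in the proof of
Theorem 1 for the HSIC-PA scheme. -/
theorem hsic_pa_QM1_closed_form
    {Ω : Type*} [MeasurableSpace Ω] (μ : Measure Ω) [IsProbabilityMeasure μ]
    (M : ℕ) (hM : 1 ≤ M)
    (P0 Ps R0 Rs : ℝ) (hP0 : 0 < P0) (hPs : 0 < Ps) (hR0 : 0 < R0) (hRs : 0 < Rs)
    (ε0 εs α0 αs α1 : ℝ)
    (hε0 : ε0 = 2 ^ R0 - 1) (hεs : εs = 2 ^ Rs - 1)
    (hα0 : α0 = ε0 / P0) (hαs : αs = εs / Ps) (hα1 : α1 = (1 + εs) * α0)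
    (G : Ω → ℝ) (H : Fin M → Ω → ℝ)
    (hGmeas : Measurable G) (hHmeas : ∀ m, Measurable (H m))
    (hGnn : ∀ ω, 0 ≤ G ω) (hHnn : ∀ m ω, 0 ≤ H m ω)
    (hGdist : Measure.map G μ = expMeasure 1)
    (hHdist : ∀ m, Measure.map (H m) μ = expMeasure 1)
    (hIndep : iIndepFun
      (Fin.cons G H : Fin (M + 1) → Ω → ℝ) μ)
    (Z : Ω → ℝ) (hZ : ∀ ω, Z ω = ⨆ m : Fin M, H m ω)
    :
    (μ {ω | max (Real.logb 2 (1 + Ps * Z ω / (P0 * G ω + 1)))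
              (Real.logb 2 (1 + tau α0 (G ω))) < Rs ∧ G ω < α0}).toReal =
      ∑ i ∈ Finset.range (M + 1),
        (M.choose i : ℝ) * (-1 : ℝ) ^ i * Real.exp (-αs * i) *
          (1 - Real.exp (-(αs * P0 * i + 1) * α0)) / (αs * P0 * i + 1) :=
  hsic_pa_QM1_closed_form_general μ M P0 Ps R0 Rs hP0 hPs hR0 hRs ε0 εs α0 αs hε0 hεs hα0 hαs G H
    hGmeas hHmeas hGnn hHnn hGdist hHdist hIndep Z hZ
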